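/- arXiv:1611.01278 — 5 statements merged into one kernel-verified Lean document; each statement's English description precedes it below -/
import Mathlib

section
/- For every L ≥ 1 and every K ≥ 1, in an L-locally connected network with K users there exists a conflict-free one-shot schedule (S, t) with |S| ≥ 2·⌊K/(L+2)⌋. Explicitly, for each block k = 0, 1, ..., ⌊K/(L+2)⌋ − 1, writing b = k(L+2), one may take the receivers b+L+1 and b+L+2 into S, served by transmitters t(b+L+1) = b+1 and t(b+L+2) = b+L+2, and this choice satisfies all conflict-free schedule conditions. -/
/-!
Cut the users into `⌊K / (L + 2)⌋` blocks of `L + 2` consecutive indices. In the block with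
base `b`, receiver `b + L + 1` is served by the first transmitter `b + 1` and receiver `b + L + 2`
by the last one `b + L + 2`. Transmitter `b + 1` reaches only receivers `b + 1, …, b + L + 1`,
and transmitter `b + L + 2` only `b + L + 2, …, b + 2L + 2`, which stops short of the next
block's first scheduled receiver `b + 2L + 3`. So a scheduled receiver hears exactly one of the
active transmitters, its own.
-/

/-- `(S, t)` is a conflict-free one-shot schedule in an `L`-locally connected
network with `K` users: `S ⊆ {1,…,K}`, `t` maps `S` into `{1,…,K}` injectively,
each receiver `i ∈ S` is connected to its serving transmitter `t i`
(`t i ≤ i ≤ t i + L`), and no receiver `i ∈ S` is connected to the transmitter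
`t j` serving a different receiver `j ∈ S`. -/
def IsCFSchedule (L K : ℕ) (S : Finset ℕ) (t : ℕ → ℕ) : Prop :=
  S ⊆ Finset.Icc 1 K ∧
  (∀ i ∈ S, t i ∈ Finset.Icc 1 K) ∧
  Set.InjOn t ↑S ∧
  (∀ i ∈ S, t i ≤ i ∧ i ≤ t i + L) ∧
  (∀ i ∈ S, ∀ j ∈ S, i ≠ j → ¬(t j ≤ i ∧ i ≤ t j + L))

open Finset

theorem isCFSchedule_of_hears_iff {L K : ℕ} {S : Finset ℕ} {t : ℕ → ℕ}
    (hS : S ⊆ Icc 1 K) (ht : ∀ i ∈ S, 1 ≤ t i)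
    (hears : ∀ i ∈ S, ∀ j ∈ S, t j ≤ i ∧ i ≤ t j + L ↔ i = j) :
    IsCFSchedule L K S t := by
  have serves : ∀ i ∈ S, t i ≤ i ∧ i ≤ t i + L := fun i hi => (hears i hi i hi).2 rfl
  refine ⟨hS, fun i hi => ?_, fun i hi j hj hij => ?_, serves,
    fun i hi j hj hij => mt (hears i hi j hj).1 hij⟩
  · have := mem_Icc.1 (hS hi)
    exact mem_Icc.2 ⟨ht i hi, (serves i hi).1.trans this.2⟩
  · exact (hears i hi j hj).1 (hij ▸ serves i hi)

theorem eq_of_mul_le_mul_add {a b m c : ℕ} (hc : c < m) (h₁ : a * m ≤ b * m + c)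
    (h₂ : b * m ≤ a * m + c) : a = b := by
  have key : ∀ {x y : ℕ}, x * m ≤ y * m + c → x ≤ y := fun {x y} h =>
    Nat.le_of_lt_succ <| Nat.lt_of_mul_lt_mul_right (a := m) <| by rw [Nat.succ_mul]; omega
  exact le_antisymm (key h₁) (key h₂)

section TDMA

variable (L : ℕ)

/-- Receiver `b + L + 2`, a multiple of `L + 2`, is served by its own transmitter and receiver
`b + L + 1` by `b + 1`; the values off the scheduled receivers are irrelevant. -/
def tdmaTransmitter (i : ℕ) : ℕ := if i % (L + 2) = 0 then i else i - L

def tdmaReceivers (N : ℕ) : Finset ℕ :=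
  (range N).biUnion fun k => {k * (L + 2) + L + 1, k * (L + 2) + L + 2}

theorem tdmaTransmitter_first (k : ℕ) :
    tdmaTransmitter L (k * (L + 2) + L + 1) = k * (L + 2) + 1 := by
  have : (k * (L + 2) + L + 1) % (L + 2) = L + 1 := by
    rw [add_assoc, add_comm, Nat.add_mul_mod_self_right, Nat.mod_eq_of_lt (by omega)]
  rw [tdmaTransmitter, this, if_neg (by omega)]
  omega

theorem tdmaTransmitter_second (k : ℕ) :
    tdmaTransmitter L (k * (L + 2) + L + 2) = k * (L + 2) + L + 2 := by
  have : k * (L + 2) + L + 2 = (k + 1) * (L + 2) := by ring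
  rw [tdmaTransmitter, if_pos (by rw [this, Nat.mul_mod_left])]

variable {L}

theorem mem_tdmaReceivers {N i : ℕ} :
    i ∈ tdmaReceivers L N ↔ ∃ k < N, i = k * (L + 2) + L + 1 ∨ i = k * (L + 2) + L + 2 := by
  simp [tdmaReceivers]

theorem tdmaReceivers_subset_Icc (N : ℕ) : tdmaReceivers L N ⊆ Icc 1 (N * (L + 2)) := by
  intro i hi
  obtain ⟨k, hk, hi⟩ := mem_tdmaReceivers.1 hi
  have : k * (L + 2) + (L + 2) ≤ N * (L + 2) := by
    rw [← Nat.succ_mul]; exact Nat.mul_le_mul_right _ hk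
  rw [mem_Icc]
  omega

theorem card_tdmaReceivers (N : ℕ) : (tdmaReceivers L N).card = 2 * N := by
  rw [tdmaReceivers, card_biUnion]
  · simp [mul_comm]
  · intro k _ k' _ hkk'
    simp only [Function.onFun, disjoint_insert_left, disjoint_insert_right, disjoint_singleton,
      mem_insert, mem_singleton, not_or]
    refine ⟨⟨?_, ?_⟩, ?_, ?_⟩ <;> intro h <;>
      exact hkk' (eq_of_mul_le_mul_add (m := L + 2) (c := 1) (by omega) (by omega) (by omega))

theorem one_le_tdmaTransmitter {N i : ℕ} (hi : i ∈ tdmaReceivers L N) :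
    1 ≤ tdmaTransmitter L i := by
  obtain ⟨k, -, rfl | rfl⟩ := mem_tdmaReceivers.1 hi
  · rw [tdmaTransmitter_first]; omega
  · rw [tdmaTransmitter_second]; omega

theorem tdma_hears_iff {N i j : ℕ} (hi : i ∈ tdmaReceivers L N) (hj : j ∈ tdmaReceivers L N) :
    tdmaTransmitter L j ≤ i ∧ i ≤ tdmaTransmitter L j + L ↔ i = j := by
  obtain ⟨k, -, hi⟩ := mem_tdmaReceivers.1 hi
  obtain ⟨k', -, hj⟩ := mem_tdmaReceivers.1 hj
  -- in every case either side forces the two receivers into the same block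
  rcases hi with rfl | rfl <;> rcases hj with rfl | rfl <;>
    simp only [tdmaTransmitter_first, tdmaTransmitter_second] <;>
    constructor <;> intro h <;>
    obtain rfl := eq_of_mul_le_mul_add (a := k) (b := k') (m := L + 2) (c := L + 1)
      (by omega) (by omega) (by omega) <;> omega

end TDMA

theorem tdma_achievability_general (L K : ℕ) :
    ∃ (S : Finset ℕ) (t : ℕ → ℕ),
      IsCFSchedule L K S t ∧
      2 * (K / (L + 2)) ≤ S.card ∧
      S = (Finset.range (K / (L + 2))).biUnion
            (fun k => {k * (L + 2) + L + 1, k * (L + 2) + L + 2}) ∧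
      (∀ k < K / (L + 2),
        t (k * (L + 2) + L + 1) = k * (L + 2) + 1 ∧
        t (k * (L + 2) + L + 2) = k * (L + 2) + L + 2) := by
  have hS : tdmaReceivers L (K / (L + 2)) ⊆ Icc 1 K :=
    (tdmaReceivers_subset_Icc _).trans (Icc_subset_Icc le_rfl (Nat.div_mul_le_self K _))
  refine ⟨tdmaReceivers L (K / (L + 2)), tdmaTransmitter L, ?_, (card_tdmaReceivers _).ge, rfl,
    fun k _ => ⟨tdmaTransmitter_first L k, tdmaTransmitter_second L k⟩⟩
  exact isCFSchedule_of_hears_iff hS (fun i => one_le_tdmaTransmitter)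
    (fun i hi j hj => tdma_hears_iff hi hj)

/-- For every `L ≥ 1` and `K ≥ 1` there is a conflict-free one-shot schedule
with at least `2 * ⌊K / (L + 2)⌋` scheduled receivers; explicitly, for each block
`k < ⌊K / (L + 2)⌋` with base `b = k (L + 2)`, one may schedule receivers
`b + L + 1` and `b + L + 2`, served by transmitters `b + 1` and `b + L + 2`
respectively. -/
theorem tdma_achievability (L K : ℕ) (hL : 1 ≤ L) (hK : 1 ≤ K) :
    ∃ (S : Finset ℕ) (t : ℕ → ℕ),
      IsCFSchedule L K S t ∧
      2 * (K / (L + 2)) ≤ S.card ∧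
      S = (Finset.range (K / (L + 2))).biUnion
            (fun k => {k * (L + 2) + L + 1, k * (L + 2) + L + 2}) ∧
      (∀ k < K / (L + 2),
        t (k * (L + 2) + L + 1) = k * (L + 2) + 1 ∧
        t (k * (L + 2) + L + 2) = k * (L + 2) + L + 2) :=
  tdma_achievability_general L K
end

section
/- For every L ≥ 1 and K ≥ 1, if (S, t) is a conflict-free one-shot schedule in an L-locally connected network with K users, then every window of L+2 consecutive integers contains at most 2 elements of S. That is, for every integer a, |S ∩ {a, a+1, ..., a+L+1}| ≤ 2. -/
/-- In any conflict-free one-shot schedule of an `L`-locally connected network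
with `K` users, every window of `L + 2` consecutive integers
`{a, a+1, …, a+L+1}` contains at most `2` scheduled receivers. -/
theorem schedule_window_bound (L K : ℕ) (hL : 1 ≤ L) (hK : 1 ≤ K)
    (S : Finset ℕ) (t : ℕ → ℕ) (hS : IsCFSchedule L K S t) :
    ∀ a : ℤ, (S.filter (fun i : ℕ => a ≤ (i : ℤ) ∧ (i : ℤ) ≤ a + L + 1)).card ≤ 2 := by
  intro a
  by_contra h
  push_neg at h
  rw [Finset.two_lt_card_iff] at h
  obtain ⟨x, y, z, hx, hy, hz, hxy, hxz, hyz⟩ := h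
  obtain ⟨hS1, hS2, hinj, hconn, hconf⟩ := hS
  simp only [Finset.mem_filter] at hx hy hz
  have key : ∀ i j k : ℕ, i ∈ S → j ∈ S → k ∈ S → i < j → j < k →
      a ≤ (i : ℤ) → (k : ℤ) ≤ a + L + 1 → False := by
    intro i j k hi hj hk hij hjk hai hka
    have h1 : i < t j := by
      have hc := hconf i hi j hj (by omega)
      have hjL := (hconn j hj).2
      omega
    have h2 : t j + L < k := by
      have hc := hconf k hk j hj (by omega)
      have htj := (hconn j hj).1
      omega
    have : (i : ℤ) + L + 2 ≤ (k : ℤ) := by push_cast; omega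
    omega
  rcases lt_trichotomy x y with h1 | h1 | h1
  · rcases lt_trichotomy y z with h2 | h2 | h2
    · exact key x y z hx.1 hy.1 hz.1 h1 h2 hx.2.1 hz.2.2
    · exact hyz h2
    · rcases lt_trichotomy x z with h3 | h3 | h3
      · exact key x z y hx.1 hz.1 hy.1 h3 h2 hx.2.1 hy.2.2
      · exact hxz h3
      · exact key z x y hz.1 hx.1 hy.1 h3 h1 hz.2.1 hy.2.2
  · exact hxy h1
  · rcases lt_trichotomy x z with h2 | h2 | h2
    · exact key y x z hy.1 hx.1 hz.1 h1 h2 hy.2.1 hz.2.2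
    · exact hxz h2
    · rcases lt_trichotomy y z with h3 | h3 | h3
      · exact key y z x hy.1 hz.1 hx.1 h3 h2 hy.2.1 hx.2.2
      · exact hyz h3
      · exact key z y x hz.1 hy.1 hx.1 h3 h1 hz.2.1 hx.2.2
end

section
/- For every L ≥ 1 and K ≥ 1, every conflict-free one-shot schedule (S, t) in an L-locally connected network with K users satisfies |S| ≤ 2·⌈K/(L+2)⌉. -/
/-- Every conflict-free one-shot schedule in an `L`-locally connected network
with `K` users schedules at most `2 * ⌈K / (L + 2)⌉` receivers. -/
theorem schedule_card_upper_bound (L K : ℕ) (hL : 1 ≤ L) (hK : 1 ≤ K)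
    (S : Finset ℕ) (t : ℕ → ℕ) (hS : IsCFSchedule L K S t) :
    S.card ≤ 2 * ((K + L + 1) / (L + 2)) := by
  obtain ⟨hSub, htIcc, htInj, hconn, hconf⟩ := hS
  -- Key spacing lemma: any three scheduled receivers a < b < c satisfy c ≥ a + L + 2.
  have key : ∀ a ∈ S, ∀ b ∈ S, ∀ c ∈ S, a < b → b < c → a + (L + 2) ≤ c := by
    intro a ha b hb c hc hab hbc
    have hb1 := (hconn b hb).1
    have hb2 := (hconn b hb).2
    have h1 : a < t b := by
      by_contra h
      push_neg at h
      exact hconf a ha b hb (Nat.ne_of_lt hab) ⟨h, by omega⟩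
    have h2 : t b + L < c := by
      by_contra h
      push_neg at h
      exact hconf c hc b hb (Nat.ne_of_gt hbc) ⟨by omega, h⟩
    omega
  rcases Nat.eq_zero_or_pos S.card with hm | hm
  · simp [hm]
  set f := S.orderEmbOfFin rfl with hf
  have hmem : ∀ i, f i ∈ S := fun i => S.orderEmbOfFin_mem rfl i
  have hstep : ∀ q (h : 2 * q < S.card),
      (f ⟨0, hm⟩ : ℕ) + q * (L + 2) ≤ f ⟨2 * q, h⟩ := by
    intro q
    induction q with
    | zero => intro h; simp
    | succ q ih =>
      intro h
      have h2q : 2 * q < S.card := by omega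
      have h2q1 : 2 * q + 1 < S.card := by omega
      have ih' := ih h2q
      have hab : (f ⟨2 * q, h2q⟩ : ℕ) < f ⟨2 * q + 1, h2q1⟩ :=
        f.strictMono (by simp [Fin.lt_def])
      have hbc : (f ⟨2 * q + 1, h2q1⟩ : ℕ) < f ⟨2 * (q + 1), h⟩ :=
        f.strictMono (by simp [Fin.lt_def]; omega)
      have := key _ (hmem ⟨2 * q, h2q⟩) _ (hmem ⟨2 * q + 1, h2q1⟩)
        _ (hmem ⟨2 * (q + 1), h⟩) hab hbc
      have : (f ⟨2 * q, h2q⟩ : ℕ) + (L + 2) ≤ f ⟨2 * (q + 1), h⟩ := this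
      calc (f ⟨0, hm⟩ : ℕ) + (q + 1) * (L + 2)
          = (f ⟨0, hm⟩ : ℕ) + q * (L + 2) + (L + 2) := by ring
        _ ≤ (f ⟨2 * q, h2q⟩ : ℕ) + (L + 2) := by omega
        _ ≤ _ := this
  set q := (S.card - 1) / 2 with hq
  have hqlt : 2 * q < S.card := by omega
  have hbig := hstep q hqlt
  have h0 : 1 ≤ (f ⟨0, hm⟩ : ℕ) := (Finset.mem_Icc.mp (hSub (hmem ⟨0, hm⟩))).1
  have hK' : (f ⟨2 * q, hqlt⟩ : ℕ) ≤ K := (Finset.mem_Icc.mp (hSub (hmem ⟨2 * q, hqlt⟩))).2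
  have hqK : q * (L + 2) ≤ K - 1 := by omega
  have hqd : q ≤ (K - 1) / (L + 2) := Nat.le_div_iff_mul_le (by omega) |>.mpr hqK
  have hdiv : (K + L + 1) / (L + 2) = (K - 1) / (L + 2) + 1 := by
    have h := Nat.add_div_right (K - 1) (show 0 < L + 2 by omega)
    rw [show K - 1 + (L + 2) = K + L + 1 by omega] at h
    omega
  have hcard : S.card ≤ 2 * q + 2 := by omega
  omega
end

section
/- For every fixed L ≥ 1, let M(K) denote the maximum cardinality of a set S such that some injective t makes (S, t) a conflict-free one-shot schedule in an L-locally connected network with K users. Then M(K)/K converges to 2/(L+2) as K → ∞. -/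
open Filter

lemma gap_lemma (L r s : ℕ) (h : r ≠ s) :
    r*(L+2)+(L+2) ≤ s*(L+2) ∨ s*(L+2)+(L+2) ≤ r*(L+2) := by
  rcases Nat.lt_or_ge r s with h' | h'
  · left
    calc r*(L+2)+(L+2) = (r+1)*(L+2) := by ring
    _ ≤ s*(L+2) := Nat.mul_le_mul_right _ h'
  · right
    have h'' : s + 1 ≤ r := by omega
    calc s*(L+2)+(L+2) = (s+1)*(L+2) := by ring
    _ ≤ r*(L+2) := Nat.mul_le_mul_right _ h''

lemma construction (L K : ℕ) (hL : 1 ≤ L) :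
    ∃ S t, IsCFSchedule L K S t ∧ S.card = 2 * (K / (L+2)) := by
  set q := K / (L+2) with hq
  set f : ℕ → ℕ := fun r => r*(L+2)+1 with hf
  set g : ℕ → ℕ := fun r => r*(L+2)+(L+2) with hg
  set S : Finset ℕ := (Finset.range q).image f ∪ (Finset.range q).image g with hS
  set t : ℕ → ℕ := fun x => if x % (L+2) = 1 then x else x - L with ht
  have hqK : q*(L+2) ≤ K := Nat.div_mul_le_self K (L+2)
  have hmem : ∀ i ∈ S, ∃ r < q, i = r*(L+2)+1 ∨ i = r*(L+2)+(L+2) := by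
    intro i hi
    simp only [hS, Finset.mem_union, Finset.mem_image, Finset.mem_range, hf, hg] at hi
    rcases hi with ⟨r, hr, rfl⟩ | ⟨r, hr, rfl⟩
    · exact ⟨r, hr, Or.inl rfl⟩
    · exact ⟨r, hr, Or.inr rfl⟩
  have ht1 : ∀ r, t (r*(L+2)+1) = r*(L+2)+1 := by
    intro r
    have h1 : (r*(L+2)+1) % (L+2) = 1 := by
      rw [mul_comm, Nat.mul_add_mod]
      exact Nat.mod_eq_of_lt (by omega)
    simp [ht, h1]
  have ht2 : ∀ r, t (r*(L+2)+(L+2)) = r*(L+2)+2 := by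
    intro r
    have h1 : (r*(L+2)+(L+2)) % (L+2) = 0 := by
      have : r*(L+2)+(L+2) = (r+1)*(L+2) := by ring
      rw [this, Nat.mul_mod_left]
    rw [ht]
    simp only [h1]
    rw [if_neg (by omega)]
    omega
  refine ⟨S, t, ⟨?_, ?_, ?_, ?_, ?_⟩, ?_⟩
  · -- S ⊆ Icc 1 K
    intro i hi
    obtain ⟨r, hr, hcase⟩ := hmem i hi
    have : (r+1)*(L+2) ≤ q*(L+2) := Nat.mul_le_mul_right _ (by omega)
    have hrr : r*(L+2)+(L+2) ≤ q*(L+2) := by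
      calc r*(L+2)+(L+2) = (r+1)*(L+2) := by ring
      _ ≤ q*(L+2) := this
    rw [Finset.mem_Icc]
    rcases hcase with rfl | rfl <;> omega
  · -- t maps into Icc 1 K
    intro i hi
    obtain ⟨r, hr, hcase⟩ := hmem i hi
    have hrr : r*(L+2)+(L+2) ≤ q*(L+2) := by
      calc r*(L+2)+(L+2) = (r+1)*(L+2) := by ring
      _ ≤ q*(L+2) := Nat.mul_le_mul_right _ (by omega)
    rw [Finset.mem_Icc]
    rcases hcase with rfl | rfl
    · rw [ht1]; omega
    · rw [ht2]; omega
  · -- InjOn t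
    intro a ha b hb hab
    obtain ⟨r, hr, hca⟩ := hmem a (by exact_mod_cast ha)
    obtain ⟨s, hs, hcb⟩ := hmem b (by exact_mod_cast hb)
    have hgap : r = s ∨ (r*(L+2)+(L+2) ≤ s*(L+2) ∨ s*(L+2)+(L+2) ≤ r*(L+2)) := by
      by_cases h : r = s
      · exact Or.inl h
      · exact Or.inr (gap_lemma L r s h)
    rcases hca with rfl | rfl <;> rcases hcb with rfl | rfl
    · rw [ht1 r, ht1 s] at hab
      rcases hgap with rfl | hgap
      · omega
      · omega
    · rw [ht1 r, ht2 s] at hab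
      rcases hgap with rfl | hgap
      · omega
      · omega
    · rw [ht2 r, ht1 s] at hab
      rcases hgap with rfl | hgap
      · omega
      · omega
    · rw [ht2 r, ht2 s] at hab
      rcases hgap with rfl | hgap
      · omega
      · omega
  · -- t i ≤ i ≤ t i + L
    intro i hi
    obtain ⟨r, hr, hcase⟩ := hmem i hi
    rcases hcase with rfl | rfl
    · rw [ht1]; omega
    · rw [ht2]; omega
  · -- conflict-free
    intro i hi j hj hij
    obtain ⟨r, hr, hca⟩ := hmem i hi
    obtain ⟨s, hs, hcb⟩ := hmem j hj
    have hgap : r = s ∨ (r*(L+2)+(L+2) ≤ s*(L+2) ∨ s*(L+2)+(L+2) ≤ r*(L+2)) := by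
      by_cases h : r = s
      · exact Or.inl h
      · exact Or.inr (gap_lemma L r s h)
    rcases hca with rfl | rfl <;> rcases hcb with rfl | rfl
    · rw [ht1 s]
      rcases hgap with rfl | hgap <;> omega
    · rw [ht2 s]
      rcases hgap with rfl | hgap <;> omega
    · rw [ht1 s]
      rcases hgap with rfl | hgap <;> omega
    · rw [ht2 s]
      rcases hgap with rfl | hgap <;> omega
  · -- cardinality
    have hinjf : Function.Injective f := by
      intro a b hab
      simp only [hf] at hab
      have : a*(L+2) = b*(L+2) := by omega
      exact Nat.eq_of_mul_eq_mul_right (by omega) this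
    have hinjg : Function.Injective g := by
      intro a b hab
      simp only [hg] at hab
      have : a*(L+2) = b*(L+2) := by omega
      exact Nat.eq_of_mul_eq_mul_right (by omega) this
    have hdisj : Disjoint ((Finset.range q).image f) ((Finset.range q).image g) := by
      rw [Finset.disjoint_left]
      intro x h1 h2
      simp only [Finset.mem_image, Finset.mem_range, hf, hg] at h1 h2
      obtain ⟨r, hr, rfl⟩ := h1
      obtain ⟨s, hs, heq⟩ := h2
      by_cases h : s = r
      · subst h; omega
      · rcases gap_lemma L s r h with hgap | hgap <;> omega
    rw [hS, Finset.card_union_of_disjoint hdisj,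
      Finset.card_image_of_injective _ hinjf,
      Finset.card_image_of_injective _ hinjg, Finset.card_range]
    omega

lemma pair_lemma {L K : ℕ} {S : Finset ℕ} {t : ℕ → ℕ} (h : IsCFSchedule L K S t)
    {i j : ℕ} (hi : i ∈ S) (hj : j ∈ S) (hij : i < j) : t i + L < j ∧ i < t j := by
  obtain ⟨-, -, -, h4, h5⟩ := h
  have hi' := h4 i hi
  have hj' := h4 j hj
  have c1 := h5 i hi j hj (by omega)
  have c2 := h5 j hj i hi (by omega)
  omega

lemma upper_bound {L K : ℕ} {S : Finset ℕ} {t : ℕ → ℕ} (h : IsCFSchedule L K S t) :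
    S.card * (L+2) ≤ 2*K + 2*(L+2) := by
  by_cases hn : S.card ≤ 2
  · have : S.card * (L+2) ≤ 2*(L+2) := Nat.mul_le_mul_right _ hn
    omega
  push_neg at hn
  set n := S.card with hncard
  set f := S.orderEmbOfFin hncard.symm with hfdef
  have hmemS : ∀ m : Fin n, f m ∈ S := fun m => S.orderEmbOfFin_mem hncard.symm m
  have hKbound : ∀ m : Fin n, 1 ≤ t (f m) ∧ t (f m) ≤ K := by
    intro m
    have := h.2.1 (f m) (hmemS m)
    rw [Finset.mem_Icc] at this
    exact this
  have hstep : ∀ m : ℕ, (hm : m + 2 < n) →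
      t (f ⟨m, by omega⟩) + (L+2) ≤ t (f ⟨m+2, hm⟩) := by
    intro m hm
    have h01 : (⟨m, by omega⟩ : Fin n) < ⟨m+1, by omega⟩ := by
      simp [Fin.mk_lt_mk]
    have h12 : (⟨m+1, by omega⟩ : Fin n) < ⟨m+2, hm⟩ := by
      simp [Fin.mk_lt_mk]
    have hlt1 : f ⟨m, by omega⟩ < f ⟨m+1, by omega⟩ := f.strictMono h01
    have hlt2 : f ⟨m+1, by omega⟩ < f ⟨m+2, hm⟩ := f.strictMono h12
    have p1 := pair_lemma h (hmemS _) (hmemS _) hlt1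
    have p2 := pair_lemma h (hmemS _) (hmemS _) hlt2
    omega
  have key : ∀ k : ℕ, (hk : 2*k < n) → k*(L+2) + 1 ≤ t (f ⟨2*k, hk⟩) := by
    intro k
    induction k with
    | zero =>
      intro hk
      have := (hKbound ⟨0, by omega⟩).1
      simpa using this
    | succ k ih =>
      intro hk
      have hk' : 2*k < n := by omega
      have hstep' := hstep (2*k) (by omega)
      have ihh := ih hk'
      have heqfin : (⟨2*(k+1), hk⟩ : Fin n) = ⟨2*k+2, by omega⟩ := by
        simp [Fin.mk_eq_mk]; omega
      rw [heqfin]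
      have : (k+1)*(L+2) = k*(L+2) + (L+2) := by ring
      omega
  have hn0 : 0 < n := by omega
  set k := (n-1)/2 with hk
  have hkn : 2*k < n := by omega
  have hkey := key k hkn
  have hKb := (hKbound ⟨2*k, hkn⟩).2
  have hKk : k*(L+2) + 1 ≤ K := le_trans hkey hKb
  have hnk : n ≤ 2*k + 2 := by omega
  calc n*(L+2) ≤ (2*k+2)*(L+2) := Nat.mul_le_mul_right _ hnk
  _ = 2*(k*(L+2)) + 2*(L+2) := by ring
  _ ≤ 2*K + 2*(L+2) := by omega

/-- For fixed `L ≥ 1`, if `M K` is the maximum number of receivers that can be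
scheduled by a conflict-free one-shot schedule in an `L`-locally connected
network with `K` users, then `M K / K → 2 / (L + 2)` as `K → ∞`. -/
theorem max_schedule_density_limit (L : ℕ) (hL : 1 ≤ L) (M : ℕ → ℕ)
    (hM : ∀ K : ℕ,
      IsGreatest {n : ℕ | ∃ (S : Finset ℕ) (t : ℕ → ℕ),
        IsCFSchedule L K S t ∧ S.card = n} (M K)) :
    Tendsto (fun K : ℕ => (M K : ℝ) / K) atTop (nhds (2 / (L + 2))) := by
  have hup : ∀ K, M K * (L+2) ≤ 2*K + 2*(L+2) := by
    intro K
    obtain ⟨S, t, hcf, hcard⟩ := (hM K).1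
    calc M K * (L+2) = S.card * (L+2) := by rw [hcard]
    _ ≤ 2*K + 2*(L+2) := upper_bound hcf
  have hlo : ∀ K, 2*K ≤ M K * (L+2) + 2*(L+1) := by
    intro K
    obtain ⟨S, t, hcf, hcard⟩ := construction L K hL
    have h1 : 2*(K/(L+2)) ≤ M K := (hM K).2 ⟨S, t, hcf, hcard⟩
    have h2 : 2*(K/(L+2))*(L+2) ≤ M K*(L+2) := Nat.mul_le_mul_right _ h1
    have h3 := Nat.div_add_mod K (L+2)
    have h4 : K % (L+2) < L+2 := Nat.mod_lt _ (by omega)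
    have h5 : 2*(K/(L+2))*(L+2) = 2*((L+2)*(K/(L+2))) := by ring
    rw [h5] at h2
    generalize hA : (L+2)*(K/(L+2)) = A at *
    omega
  have hcast : ∀ K : ℕ, 1 ≤ K → |(M K : ℝ)/K - 2/((L:ℝ)+2)| ≤ 2 / K := by
    intro K hK
    have hK0 : (0:ℝ) < K := by exact_mod_cast hK
    have hL0 : (0:ℝ) < (L:ℝ)+2 := by positivity
    have h1 : (M K : ℝ)*((L:ℝ)+2) ≤ 2*K + 2*((L:ℝ)+2) := by exact_mod_cast hup K
    have h2 : 2*(K:ℝ) ≤ (M K : ℝ)*((L:ℝ)+2) + 2*((L:ℝ)+1) := by exact_mod_cast hlo K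
    have keyeq : (M K : ℝ)/K - 2/((L:ℝ)+2) = ((M K : ℝ)*((L:ℝ)+2) - 2*K)/(K*((L:ℝ)+2)) := by
      field_simp
    have hden : (0:ℝ) < (K:ℝ)*((L:ℝ)+2) := mul_pos hK0 hL0
    rw [keyeq, abs_div, abs_of_pos hden]
    rw [div_le_div_iff₀ hden hK0]
    have hnum : |(M K : ℝ)*((L:ℝ)+2) - 2*K| ≤ 2*((L:ℝ)+2) := by
      rw [abs_le]
      constructor <;> linarith
    calc |(M K : ℝ)*((L:ℝ)+2) - 2*K| * K ≤ (2*((L:ℝ)+2)) * K :=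
        mul_le_mul_of_nonneg_right hnum hK0.le
    _ = 2 * (K * ((L:ℝ)+2)) := by ring
  rw [show (2:ℝ) / ((L:ℝ) + 2) = 2/((L:ℝ)+2) from rfl]
  rw [← tendsto_sub_nhds_zero_iff]
  apply squeeze_zero_norm' ?_ (tendsto_const_div_atTop_nhds_zero_nat 2)
  filter_upwards [eventually_ge_atTop 1] with K hK
  rw [Real.norm_eq_abs]
  exact hcast K hK
end

section
/- For L = 2 and K divisible by 4, the maximum cardinality of a set S such that some injective t makes (S, t) a conflict-free one-shot schedule in a 2-locally connected network with K users is exactly K/2. -/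
theorem Finset.exists_lt_lt_of_two_lt_card {α : Type*} [LinearOrder α] {s : Finset α}
    (hs : 2 < s.card) : ∃ a ∈ s, ∃ b ∈ s, ∃ c ∈ s, a < b ∧ b < c := by
  obtain ⟨u, hus, hu⟩ := Finset.exists_subset_card_eq hs
  have mem (i : Fin 3) : u.orderEmbOfFin hu i ∈ s := hus (u.orderEmbOfFin_mem hu i)
  exact ⟨_, mem 0, _, mem 1, _, mem 2,
    (u.orderEmbOfFin hu).strictMono (by decide), (u.orderEmbOfFin hu).strictMono (by decide)⟩

theorem card_le_two_mul_of_triples_spread {S : Finset ℕ} {m q : ℕ} (hm : 0 < m)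
    (hS : S ⊆ Finset.Icc 1 (m * q))
    (hspread : ∀ i ∈ S, ∀ j ∈ S, ∀ k ∈ S, i < j → j < k → i + m ≤ k) :
    S.card ≤ 2 * q := by
  have hblock : ∀ x ∈ S, (x - 1) / m ∈ Finset.range q := by
    intro x hx
    have hx' := Finset.mem_Icc.1 (hS hx)
    rw [Finset.mem_range, Nat.div_lt_iff_lt_mul hm, mul_comm]
    omega
  have hfiber : ∀ b ∈ Finset.range q, (S.filter fun x => (x - 1) / m = b).card ≤ 2 := by
    intro b _
    by_contra! h
    obtain ⟨i, hi, j, hj, k, hk, hij, hjk⟩ := Finset.exists_lt_lt_of_two_lt_card h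
    rw [Finset.mem_filter] at hi hj hk
    have hik := hspread i hi.1 j hj.1 k hk.1 hij hjk
    have hk_lt := Nat.lt_div_mul_add (a := k - 1) hm
    have hi_ge := Nat.div_mul_le_self (i - 1) m
    rw [hk.2] at hk_lt
    rw [hi.2] at hi_ge
    have hi_pos := (Finset.mem_Icc.1 (hS hi.1)).1
    omega
  simpa using Finset.card_le_mul_card_image_of_maps_to hblock 2 hfiber

namespace IsCFSchedule

variable {L K : ℕ} {S : Finset ℕ} {t : ℕ → ℕ}

theorem add_le_of_lt_of_lt (h : IsCFSchedule L K S t) {i j k : ℕ} (hi : i ∈ S) (hj : j ∈ S)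
    (hk : k ∈ S) (hij : i < j) (hjk : j < k) : i + (L + 2) ≤ k := by
  have hserve := h.2.2.2.1 j hj
  have hi_free := h.2.2.2.2 i hi j hj hij.ne
  have hk_free := h.2.2.2.2 k hk j hj hjk.ne'
  omega

theorem card_le {q : ℕ} (h : IsCFSchedule L ((L + 2) * q) S t) : S.card ≤ 2 * q :=
  card_le_two_mul_of_triples_spread (Nat.succ_pos _) h.1 fun _ hi _ hj _ hk =>
    h.add_le_of_lt_of_lt hi hj hk

end IsCFSchedule

theorem exists_isCFSchedule_two (q : ℕ) :
    ∃ (S : Finset ℕ) (t : ℕ → ℕ), IsCFSchedule 2 (4 * q) S t ∧ S.card = 2 * q := by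
  -- `n ↦ 2n + 3 - n % 2` enumerates `3, 4, 7, 8, …`; odd receivers are served two steps back
  refine ⟨(Finset.range (2 * q)).image fun n => 2 * n + 3 - n % 2, fun i => i - 2 * (i % 2),
    ⟨?_, ?_, ?_, ?_, ?_⟩, ?_⟩
  · intro i
    simp only [Finset.mem_image, Finset.mem_range, Finset.mem_Icc]
    omega
  · simp only [Finset.mem_image, Finset.mem_range, Finset.mem_Icc]
    omega
  · intro i hi i' hi' h
    simp only [Finset.coe_image, Finset.coe_range, Set.mem_image, Set.mem_Iio] at hi hi' h
    omega
  · simp only [Finset.mem_image, Finset.mem_range]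
    omega
  · simp only [Finset.mem_image, Finset.mem_range]
    omega
  · rw [Finset.card_image_of_injective _ (fun n n' h => by omega),
      Finset.card_range]

/-- For `L = 2` and `K` divisible by `4`, the maximum number of receivers
schedulable by a conflict-free one-shot schedule in a `2`-locally connected
network with `K` users is exactly `K / 2`. -/
theorem max_schedule_L2 (K : ℕ) (hK : 4 ∣ K) :
    IsGreatest {n : ℕ | ∃ (S : Finset ℕ) (t : ℕ → ℕ),
      IsCFSchedule 2 K S t ∧ S.card = n} (K / 2) := by
  obtain ⟨q, rfl⟩ := hK
  rw [show 4 * q / 2 = 2 * q by omega]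
  exact ⟨exists_isCFSchedule_two q, fun _ ⟨_, _, h, hcard⟩ => hcard ▸ h.card_le⟩
end
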